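/- For t ∈ ℝ let L_t be the 3×3 real matrix with rows (1, t, −t²/2), (0, 1, −t), (0, 0, 1), and let 𝕀₂¹ be the 3×3 real symmetric matrix with entries 1 at positions (1,3), (3,1), (2,2) and 0 elsewhere. Then: (i) L_t L_s = L_{t+s} for all t,s ∈ ℝ; (ii) L_t 𝕀₂¹ L_tᵀ = 𝕀₂¹ for all t, i.e., each L_t lies in O(2,1) with respect to 𝕀₂¹; (iii) the set S of affine transformations of ℝ³ of the form y ↦ L_t y + (α, β, t), with α, β, t ∈ ℝ, is a subgroup of the affine group of ℝ³ and acts simply transitively on ℝ³: for any y₀, y₁ ∈ ℝ³ there is exactly one element of S sending y₀ to y₁. -/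
import Mathlib


open Matrix

/-- The matrix `L_t` with rows `(1, t, -t²/2)`, `(0, 1, -t)`, `(0, 0, 1)`. -/
noncomputable def Lmat (t : ℝ) : Matrix (Fin 3) (Fin 3) ℝ :=
  !![1, t, -t ^ 2 / 2; 0, 1, -t; 0, 0, 1]

/-- The Lorentz form matrix `𝕀₂¹` with `1`'s at positions `(1,3)`, `(3,1)`, `(2,2)`. -/
noncomputable def iota21 : Matrix (Fin 3) (Fin 3) ℝ :=
  !![0, 0, 1; 0, 1, 0; 1, 0, 0]

/-- The set `S` of affine transformations of `ℝ³` of the form `y ↦ L_t y + (α, β, t)`. -/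
noncomputable def Srho : Set ((Fin 3 → ℝ) → (Fin 3 → ℝ)) :=
  {f | ∃ t α β : ℝ, f = fun y => (Lmat t).mulVec y + ![α, β, t]}

lemma aff_apply (t α β : ℝ) (y : Fin 3 → ℝ) :
    (Lmat t).mulVec y + ![α, β, t] =
      ![y 0 + t * y 1 + (-t ^ 2 / 2) * y 2 + α, y 1 + (-t) * y 2 + β, y 2 + t] := by
  funext i
  fin_cases i <;>
    simp [Lmat, mulVec, dotProduct, Fin.sum_univ_three] <;> ring

/-- (i) `L_t L_s = L_{t+s}`; (ii) `L_t 𝕀₂¹ L_tᵀ = 𝕀₂¹`, i.e. each `L_t ∈ O(2,1)`;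
(iii) the set `S` of affine maps `y ↦ L_t y + (α, β, t)` is a subgroup of the affine group of
`ℝ³` (contains the identity, closed under composition and two-sided inverses) acting simply
transitively on `ℝ³`: for any `y₀, y₁` there is exactly one element of `S` sending `y₀` to
`y₁`. -/
theorem Lmat_one_param_and_Srho_simply_transitive :
    (∀ t s : ℝ, Lmat t * Lmat s = Lmat (t + s)) ∧
    (∀ t : ℝ, Lmat t * iota21 * (Lmat t)ᵀ = iota21) ∧
    (id ∈ Srho) ∧
    (∀ f ∈ Srho, ∀ g ∈ Srho, f ∘ g ∈ Srho) ∧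
    (∀ f ∈ Srho, ∃ g ∈ Srho, f ∘ g = id ∧ g ∘ f = id) ∧
    (∀ y₀ y₁ : Fin 3 → ℝ, ∃! f, f ∈ Srho ∧ f y₀ = y₁) := by
  refine ⟨?_, ?_, ?_, ?_, ?_, ?_⟩
  · intro t s
    ext i j
    fin_cases i <;> fin_cases j <;>
      simp [Lmat, Matrix.mul_apply, Fin.sum_univ_three, Matrix.vecHead, Matrix.vecTail] <;> ring
  · intro t
    ext i j
    fin_cases i <;> fin_cases j <;>
      simp [Lmat, iota21, Matrix.mul_apply, Matrix.transpose, Matrix.of_apply,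
        Fin.sum_univ_three, Matrix.vecHead, Matrix.vecTail] <;> ring
  · refine ⟨0, 0, 0, ?_⟩
    funext y
    rw [aff_apply]
    funext i
    fin_cases i <;> simp
  · rintro f ⟨t, α, β, rfl⟩ g ⟨s, γ, δ, rfl⟩
    refine ⟨t + s, α + t * δ + (-t ^ 2 / 2) * s + γ, β + δ + (-t) * s, ?_⟩
    funext y
    simp only [Function.comp_apply, aff_apply]
    funext i
    fin_cases i <;> simp <;> ring
  · rintro f ⟨t, α, β, rfl⟩
    refine ⟨fun y => (Lmat (-t)).mulVec y + ![-α + t * β + t ^ 2 / 2 * t, -β - t * t, -t],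
      ⟨-t, _, _, rfl⟩, ?_, ?_⟩ <;>
    · funext y
      simp only [Function.comp_apply, aff_apply]
      funext i
      fin_cases i <;> simp <;> ring
  · intro y₀ y₁
    set t := y₁ 2 - y₀ 2 with ht
    refine ⟨fun y => (Lmat t).mulVec y + ![y₁ 0 - (y₀ 0 + t * y₀ 1 + (-t ^ 2 / 2) * y₀ 2),
        y₁ 1 - (y₀ 1 + (-t) * y₀ 2), t], ⟨⟨t, _, _, rfl⟩, ?_⟩, ?_⟩
    · simp only [aff_apply]
      funext i
      fin_cases i <;> simp [ht] <;> ring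
    · rintro f ⟨⟨s, γ, δ, rfl⟩, hf⟩
      simp only [aff_apply] at hf
      have h2 : y₀ 2 + s = y₁ 2 := by
        have := congrFun hf 2; simpa using this
      have h0 : y₀ 0 + s * y₀ 1 + (-s ^ 2 / 2) * y₀ 2 + γ = y₁ 0 := by
        have := congrFun hf 0; simpa using this
      have h1 : y₀ 1 + (-s) * y₀ 2 + δ = y₁ 1 := by
        have := congrFun hf 1; simpa using this
      have hs : s = t := by rw [ht]; linarith
      rw [hs] at h0 h1 ⊢
      funext y
      simp only [aff_apply]
      funext i
      fin_cases i <;> simp <;> linarith
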